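/- Let F be a monotonic filter and q ∈ (0,1). Then the total Focused BH output weight is componentwise non-increasing in the p-values: for any p1, p2 ∈ [0,1]^m with p1 ≤ p2 componentwise, letting t*_ℓ denote the Focused BH threshold computed from pℓ (ℓ = 1,2), one has ‖F(R(t*_1, p1), p1)‖ ≥ ‖F(R(t*_2, p2), p2)‖. -/
import Mathlib


open MeasureTheory Finset

/-- Total prioritization weight of a prioritization vector. -/
noncomputable def normU {m : ℕ} (U : Fin m → ℝ) : ℝ := ∑ j, U j

/-- Threshold rejection set `R(t,p) = {j : p_j ≤ t}`. -/
noncomputable def Rset {m : ℕ} (t : ℝ) (p : Fin m → ℝ) : Finset (Fin m) :=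
  Finset.univ.filter (fun j => p j ≤ t)

/-- Focused BH FDP estimate `m·t / ‖F(R(t,p),p)‖` (with `x/0 = 0`). -/
noncomputable def FDPhat {m : ℕ} (F : Finset (Fin m) → (Fin m → ℝ) → (Fin m → ℝ))
    (p : Fin m → ℝ) (t : ℝ) : ℝ :=
  (m : ℝ) * t / normU (F (Rset t p) p)

/-- The Focused BH threshold: the largest `t ∈ {0, p_1, ..., p_m}` with `FDPhat(t) ≤ q`. -/
noncomputable def tstar {m : ℕ} (F : Finset (Fin m) → (Fin m → ℝ) → (Fin m → ℝ))
    (q : ℝ) (p : Fin m → ℝ) : ℝ :=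
  sSup {t : ℝ | (t = 0 ∨ ∃ j, t = p j) ∧ FDPhat F p t ≤ q}

/-- Generalized FDP of a prioritization vector (with `0/0 = 0`). -/
noncomputable def genFDP {m : ℕ} (H0 : Finset (Fin m)) (U : Fin m → ℝ) : ℝ :=
  (∑ j ∈ H0, U j) / (∑ j, U j)

/-- A filter outputs prioritization scores in `[0,1]`, vanishing outside the rejection set. -/
def IsFilter {m : ℕ} (F : Finset (Fin m) → (Fin m → ℝ) → (Fin m → ℝ)) : Prop :=
  ∀ (R : Finset (Fin m)) (x : Fin m → ℝ) (j : Fin m),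
    (j ∉ R → F R x j = 0) ∧ F R x j ∈ Set.Icc (0 : ℝ) 1

/-- Null p-values are superuniform. -/
def Superuniform {Ω : Type*} [MeasurableSpace Ω] (μ : Measure Ω) {m : ℕ}
    (p : Ω → Fin m → ℝ) (H0 : Finset (Fin m)) : Prop :=
  ∀ j ∈ H0, ∀ t ∈ Set.Icc (0 : ℝ) 1, μ {ω | p ω j ≤ t} ≤ ENNReal.ofReal t

/-- A filter is monotonic: decreasing the p-values and enlarging the rejection set can only
increase the total prioritization weight. -/
def MonotonicFilter {m : ℕ} (F : Finset (Fin m) → (Fin m → ℝ) → (Fin m → ℝ)) : Prop :=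
  ∀ (p1 p2 : Fin m → ℝ), (∀ i, p1 i ≤ p2 i) →
    ∀ (R1 R2 : Finset (Fin m)), R2 ⊆ R1 →
      normU (F R2 p2) ≤ normU (F R1 p1)

lemma normU_nonneg' {m : ℕ} {F : Finset (Fin m) → (Fin m → ℝ) → (Fin m → ℝ)}
    (hF : IsFilter F) (R : Finset (Fin m)) (x : Fin m → ℝ) : 0 ≤ normU (F R x) :=
  Finset.sum_nonneg fun j _ => (hF R x j).2.1

lemma Sfin {m : ℕ} (F : Finset (Fin m) → (Fin m → ℝ) → (Fin m → ℝ)) (q : ℝ)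
    (p : Fin m → ℝ) :
    {t : ℝ | (t = 0 ∨ ∃ j, t = p j) ∧ FDPhat F p t ≤ q}.Finite := by
  apply Set.Finite.subset (((Set.finite_singleton (0:ℝ)).union (Set.finite_range p)))
  rintro t ⟨(rfl | ⟨j, rfl⟩), -⟩
  · exact Or.inl rfl
  · exact Or.inr ⟨j, rfl⟩

lemma zero_memS {m : ℕ} (F : Finset (Fin m) → (Fin m → ℝ) → (Fin m → ℝ)) {q : ℝ}
    (hq : 0 < q) (p : Fin m → ℝ) :
    (0:ℝ) ∈ {t : ℝ | (t = 0 ∨ ∃ j, t = p j) ∧ FDPhat F p t ≤ q} := by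
  refine ⟨Or.inl rfl, ?_⟩
  simp [FDPhat, le_of_lt hq]

/-- **The Focused BH output weight is non-increasing in the p-values (key monotonicity step
in the proof of Theorem 1(i)).**
Let `F` be a monotonic filter and `q ∈ (0,1)`. If `p1 ≤ p2` componentwise, then, with `t*_ℓ`
the Focused BH threshold computed from `pℓ`,
`‖F(R(t*_1,p1),p1)‖ ≥ ‖F(R(t*_2,p2),p2)‖`. -/
theorem focusedBH_output_weight_antitone
    {m : ℕ} (F : Finset (Fin m) → (Fin m → ℝ) → (Fin m → ℝ))
    (hF : IsFilter F) (hmono : MonotonicFilter F)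
    (q : ℝ) (hq : q ∈ Set.Ioo (0 : ℝ) 1)
    (p1 p2 : Fin m → ℝ) (hle : ∀ i, p1 i ≤ p2 i) :
    normU (F (Rset (tstar F q p2) p2) p2) ≤ normU (F (Rset (tstar F q p1) p1) p1) := by
  obtain ⟨hq0, hq1⟩ := hq
  set S2 := {t : ℝ | (t = 0 ∨ ∃ j, t = p2 j) ∧ FDPhat F p2 t ≤ q} with hS2
  set S1 := {t : ℝ | (t = 0 ∨ ∃ j, t = p1 j) ∧ FDPhat F p1 t ≤ q} with hS1
  have hfin2 := Sfin F q p2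
  have hfin1 := Sfin F q p1
  have h0mem2 := zero_memS F hq0 p2
  have h0mem1 := zero_memS F hq0 p1
  set t2 := tstar F q p2 with ht2def
  have ht2mem : t2 ∈ S2 := Set.Nonempty.csSup_mem ⟨0, h0mem2⟩ hfin2
  have ht2q : FDPhat F p2 t2 ≤ q := ht2mem.2
  have ht2nonneg : 0 ≤ t2 := le_csSup hfin2.bddAbove h0mem2
  set D2 := normU (F (Rset t2 p2) p2) with hD2def
  rcases le_or_gt D2 0 with hD2 | hD2
  · exact hD2.trans (normU_nonneg' hF _ _)
  -- T and t'
  set T : Finset ℝ := insert (0:ℝ) ((Finset.univ.filter (fun j => p1 j ≤ t2)).image p1)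
    with hTdef
  have hTne : T.Nonempty := ⟨0, Finset.mem_insert_self _ _⟩
  set t' := T.max' hTne with ht'def
  have ht'mem : t' ∈ T := T.max'_mem hTne
  have ht'0 : (0:ℝ) ≤ t' := T.le_max' 0 (Finset.mem_insert_self _ _)
  have ht'le : t' ≤ t2 := by
    apply Finset.max'_le
    intro y hy
    rcases Finset.mem_insert.mp hy with rfl | hy
    · exact ht2nonneg
    · obtain ⟨j, hj, rfl⟩ := Finset.mem_image.mp hy
      exact (Finset.mem_filter.mp hj).2
  have hRseteq : Rset t' p1 = Rset t2 p1 := by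
    ext j
    simp only [Rset, Finset.mem_filter, Finset.mem_univ, true_and]
    constructor
    · intro h; exact h.trans ht'le
    · intro h
      exact T.le_max' (p1 j) (Finset.mem_insert_of_mem (Finset.mem_image.mpr
        ⟨j, Finset.mem_filter.mpr ⟨Finset.mem_univ j, h⟩, rfl⟩))
  have hsub : Rset t2 p2 ⊆ Rset t2 p1 := by
    intro j hj
    simp only [Rset, Finset.mem_filter, Finset.mem_univ, true_and] at hj ⊢
    exact (hle j).trans hj
  have hD1 : D2 ≤ normU (F (Rset t2 p1) p1) := hmono p1 p2 hle _ _ hsub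
  have hD1pos : 0 < normU (F (Rset t2 p1) p1) := lt_of_lt_of_le hD2 hD1
  have hfdp1 : FDPhat F p1 t' ≤ q := by
    have h1 : FDPhat F p1 t' = (m : ℝ) * t' / normU (F (Rset t2 p1) p1) := by
      rw [FDPhat, hRseteq]
    rw [h1]
    calc (m : ℝ) * t' / normU (F (Rset t2 p1) p1)
        ≤ (m : ℝ) * t2 / D2 := by
          apply div_le_div₀ (by positivity)
          · exact mul_le_mul_of_nonneg_left ht'le (Nat.cast_nonneg m)
          · exact hD2
          · exact hD1
      _ = FDPhat F p2 t2 := rfl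
      _ ≤ q := ht2q
  have ht'S1 : t' ∈ S1 := by
    refine ⟨?_, hfdp1⟩
    rcases Finset.mem_insert.mp ht'mem with h | h
    · exact Or.inl h
    · obtain ⟨j, _, hj⟩ := Finset.mem_image.mp h
      exact Or.inr ⟨j, hj.symm⟩
  have ht'le1 : t' ≤ tstar F q p1 := le_csSup hfin1.bddAbove ht'S1
  have hsub1 : Rset t' p1 ⊆ Rset (tstar F q p1) p1 := by
    intro j hj
    simp only [Rset, Finset.mem_filter, Finset.mem_univ, true_and] at hj ⊢
    exact hj.trans ht'le1
  calc D2 ≤ normU (F (Rset t2 p1) p1) := hD1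
    _ = normU (F (Rset t' p1) p1) := by rw [hRseteq]
    _ ≤ normU (F (Rset (tstar F q p1) p1) p1) :=
      hmono p1 p1 (fun _ => le_rfl) _ _ hsub1
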